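/- arXiv:1402.3278 — 3 statements merged into one kernel-verified Lean document; each statement's English description precedes it below -/
import Mathlib

section
/- Let (Ω, F, P) be a probability space, G a sub-σ-algebra of F, D ∈ F, and η an integrable random variable. Let Ĝ be the σ-algebra of all A ∈ F such that there exists B ∈ G with A ∩ D = B ∩ D (restricted to a partition element; assume Ĝ is indeed a σ-algebra containing G and D). Then almost surely, 1_D · E[η 1_D | Ĝ] = 1_D · E[η 1_D | G] / P(D | G), where the right-hand side is interpreted as 0 on {P(D|G)=0}. -/
/-! Write `ρ = P(D | G)`. As `D ∈ Ĝ` and `ρ` is `Ĝ`-measurable, `ρ · E[η 1_D | Ĝ] = E[ρ η 1_D | Ĝ]`.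
Every set of `Ĝ` agrees on `D` with a set of `G`, and integrals of functions carrying the factor
`1_D` only see that trace, so `E[ρ η 1_D | Ĝ] = 1_D E[η 1_D | G]` reduces to integrals over
`B ∈ G`, where it is the symmetry `∫_B E[1_D | G] η 1_D = ∫_B E[η 1_D | G] 1_D`. Finally `ρ > 0`
a.s. on `D`, because `∫_{ρ ≤ 0} ρ = P({ρ ≤ 0} ∩ D)`. -/

open MeasureTheory Set

namespace MeasureTheory

variable {Ω : Type*} {m m₀ : MeasurableSpace Ω} {μ : Measure Ω}

lemma ae_pos_condExp_indicator_one [IsFiniteMeasure μ] (hm : m ≤ m₀) {D : Set Ω}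
    (hD : MeasurableSet D) : ∀ᵐ ω ∂μ, ω ∈ D → 0 < μ[D.indicator (fun _ => (1 : ℝ)) | m] ω := by
  set ρ := μ[D.indicator (fun _ => (1 : ℝ)) | m]
  set S := {ω | ρ ω ≤ 0}
  have hS : MeasurableSet[m] S :=
    measurableSet_le stronglyMeasurable_condExp.measurable measurable_const
  have hSD : μ (S ∩ D) = 0 := by
    have h := setIntegral_condExp hm ((integrable_const (μ := μ) (1 : ℝ)).indicator hD) hS
    rw [setIntegral_indicator hD, setIntegral_const, smul_eq_mul, mul_one] at h
    have hρS : ∫ x in S, ρ x ∂μ ≤ 0 := setIntegral_nonpos (hm S hS) fun _ hx => hx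
    exact (measureReal_eq_zero_iff).1 (le_antisymm (h ▸ hρS) measureReal_nonneg)
  filter_upwards [measure_eq_zero_iff_ae_notMem.1 hSD] with ω hω hωD
  exact lt_of_not_ge fun hle => hω ⟨hle, hωD⟩

lemma integrable_condExp_indicator_one_mul {D : Set Ω} {g : Ω → ℝ}
    (hg : Integrable g μ) : Integrable (μ[D.indicator (fun _ => (1 : ℝ)) | m] * g) μ :=
  hg.bdd_mul (c := 1) integrable_condExp.aestronglyMeasurable
    (ae_bdd_abs_condExp_of_ae_bdd_abs (ae_of_all _ fun x => by by_cases hx : x ∈ D <;> simp [hx]))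

lemma setIntegral_mul_condExp (hm : m ≤ m₀) [SigmaFinite (μ.trim hm)] {h g : Ω → ℝ}
    (hh : StronglyMeasurable[m] h) (hhg : Integrable (h * g) μ) (hg : Integrable g μ)
    {s : Set Ω} (hs : MeasurableSet[m] s) :
    ∫ x in s, h x * μ[g | m] x ∂μ = ∫ x in s, h x * g x ∂μ :=
  calc ∫ x in s, h x * μ[g | m] x ∂μ = ∫ x in s, μ[h * g | m] x ∂μ :=
        integral_congr_ae (ae_restrict_of_ae (condExp_mul_of_stronglyMeasurable_left hh hhg hg).symm)
    _ = ∫ x in s, h x * g x ∂μ := setIntegral_condExp hm hhg hs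

lemma setIntegral_condExp_mul_comm (hm : m ≤ m₀) [SigmaFinite (μ.trim hm)] {f g : Ω → ℝ}
    (hf : Integrable f μ) (hg : Integrable g μ) (hfg : Integrable (μ[f | m] * g) μ)
    (hgf : Integrable (μ[g | m] * f) μ) {s : Set Ω} (hs : MeasurableSet[m] s) :
    ∫ x in s, μ[f | m] x * g x ∂μ = ∫ x in s, μ[g | m] x * f x ∂μ := by
  rw [← setIntegral_mul_condExp hm stronglyMeasurable_condExp hfg hg hs,
    ← setIntegral_mul_condExp hm stronglyMeasurable_condExp hgf hf hs]
  simp_rw [mul_comm]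

lemma setIntegral_indicator_eq_of_inter_eq {E : Type*} [NormedAddCommGroup E] [NormedSpace ℝ E]
    {A B D : Set Ω} (hD : MeasurableSet D) (hAB : A ∩ D = B ∩ D) (f : Ω → E) :
    ∫ x in A, D.indicator f x ∂μ = ∫ x in B, D.indicator f x ∂μ := by
  rw [setIntegral_indicator hD, setIntegral_indicator hD, hAB]

theorem condExp_condExp_indicator_one_mul_indicator [IsFiniteMeasure μ] {m₁ : MeasurableSpace Ω}
    (hm : m ≤ m₀) (hm₁ : m₁ ≤ m₀) (hmm₁ : m ≤ m₁) {D : Set Ω} (hD : MeasurableSet[m₁] D)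
    (htrace : ∀ A, MeasurableSet[m₁] A → ∃ B, MeasurableSet[m] B ∧ A ∩ D = B ∩ D)
    {f : Ω → ℝ} (hf : Integrable f μ) :
    μ[μ[D.indicator (fun _ => (1 : ℝ)) | m] * D.indicator f | m₁]
      =ᵐ[μ] D.indicator (μ[D.indicator f | m]) := by
  set ρ := μ[D.indicator (fun _ => (1 : ℝ)) | m]
  set ξ := μ[D.indicator f | m]
  have hD₀ : MeasurableSet[m₀] D := hm₁ D hD
  have hfD : Integrable (D.indicator f) μ := hf.indicator hD₀
  have hξD : Integrable (ξ * D.indicator (fun _ => (1 : ℝ))) μ := by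
    have h : ξ * D.indicator (fun _ => (1 : ℝ)) = D.indicator ξ := funext fun x => by
      by_cases hx : x ∈ D <;> simp [hx]
    exact h ▸ integrable_condExp.indicator hD₀
  refine (ae_eq_condExp_of_forall_setIntegral_eq hm₁ (integrable_condExp_indicator_one_mul hfD)
    (fun _ _ _ => (integrable_condExp.indicator hD₀).integrableOn) (fun A hA _ => ?_)
    ((stronglyMeasurable_condExp.mono hmm₁).indicator hD).aestronglyMeasurable).symm
  obtain ⟨B, hB, hAB⟩ := htrace A hA
  calc ∫ x in A, D.indicator ξ x ∂μ = ∫ x in B, D.indicator ξ x ∂μ :=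
        setIntegral_indicator_eq_of_inter_eq hD₀ hAB ξ
    _ = ∫ x in B, ξ x * D.indicator (fun _ => (1 : ℝ)) x ∂μ := by
        simp_rw [← indicator_mul_right, mul_one]
    _ = ∫ x in B, ρ x * D.indicator f x ∂μ :=
        (setIntegral_condExp_mul_comm hm ((integrable_const 1).indicator hD₀) hfD
          (integrable_condExp_indicator_one_mul hfD) hξD hB).symm
    _ = ∫ x in B, D.indicator (fun x => ρ x * f x) x ∂μ := by simp_rw [indicator_mul_right]
    _ = ∫ x in A, D.indicator (fun x => ρ x * f x) x ∂μ :=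
        (setIntegral_indicator_eq_of_inter_eq hD₀ hAB _).symm
    _ = ∫ x in A, (ρ * D.indicator f) x ∂μ := by simp_rw [indicator_mul_right]; rfl

end MeasureTheory

theorem stmt2 {Ω : Type*} {F : MeasurableSpace Ω} (P : Measure Ω) [IsProbabilityMeasure P]
    (G Ghat : MeasurableSpace Ω) (hG : G ≤ F) (hGhat : Ghat ≤ F)
    (D : Set Ω) (hD : MeasurableSet[F] D)
    (hGhat_spec : ∀ A : Set Ω, MeasurableSet[Ghat] A ↔
      (MeasurableSet[F] A ∧ ∃ B : Set Ω, MeasurableSet[G] B ∧ A ∩ D = B ∩ D))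
    (η : Ω → ℝ) (hη : Integrable η P) :
    (fun ω => D.indicator (fun _ => (1 : ℝ)) ω * (P[D.indicator η | Ghat]) ω)
      =ᵐ[P] fun ω => D.indicator (fun _ => (1 : ℝ)) ω *
        ((P[D.indicator η | G]) ω / (P[D.indicator (fun _ => (1 : ℝ)) | G]) ω) := by
  have hG_le : G ≤ Ghat := fun s hs => (hGhat_spec s).2 ⟨hG s hs, s, hs, rfl⟩
  have hD_Ghat : MeasurableSet[Ghat] D := (hGhat_spec D).2 ⟨hD, univ, .univ, by simp⟩
  have hηD : Integrable (D.indicator η) P := hη.indicator hD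
  have hpull := condExp_mul_of_stronglyMeasurable_left (stronglyMeasurable_condExp.mono hG_le)
    (integrable_condExp_indicator_one_mul (D := D) hηD) hηD (m := Ghat)
  have hkey := condExp_condExp_indicator_one_mul_indicator hG hGhat hG_le hD_Ghat
    (fun A hA => ((hGhat_spec A).1 hA).2) hη
  filter_upwards [hpull, hkey, ae_pos_condExp_indicator_one hG hD] with ω hpull hkey hpos
  by_cases hω : ω ∈ D
  · rw [Pi.mul_apply, hkey, indicator_of_mem hω] at hpull
    simp only [indicator_of_mem hω, one_mul]
    rw [hpull, mul_div_cancel_left₀ _ (hpos hω).ne']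
  · simp [indicator_of_notMem hω]
end

section
/- With the notation of the direct-sum filtration F̂_t = {A ∈ F : ∀ i, ∃ A^i ∈ F^i_t, A ∩ D_i = A^i ∩ D_i}, if each filtration F^i is right-continuous (F^i_t = ∩_{s>t} F^i_s for all t), then F̂ is right-continuous: ∩_{s>t} F̂_s = F̂_t for every t ≥ 0. -/
open MeasureTheory Filter
open scoped NNReal

/-- Membership in the direct-sum family `F̂_t`. -/
def dirSumMem {Ω : Type*} {k : ℕ} (F : MeasurableSpace Ω)
    (Fi : Fin k → ℝ≥0 → MeasurableSpace Ω) (D : Fin k → Set Ω)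
    (t : ℝ≥0) (A : Set Ω) : Prop :=
  MeasurableSet[F] A ∧
    ∀ i, ∃ Ai : Set Ω, MeasurableSet[Fi i t] Ai ∧ A ∩ D i = Ai ∩ D i

/-
Only the component `F^i` matters on `D_i`. Given sets `B_n ∈ F^i_{u_n}` agreeing with `A` on `D_i`
along times `u_n ↓ t`, their `liminf` still agrees with `A` on `D_i`, and since a `liminf` ignores
finitely many terms it lies in `F^i_s` for every `s > t`, hence in `F^i_t` by right-continuity.
-/

lemma liminf_inter_eq_of_forall_inter_eq {Ω ι : Type*} {l : Filter ι} [l.NeBot]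
    {A D : Set Ω} {B : ι → Set Ω} (hB : ∀ n, B n ∩ D = A ∩ D) :
    liminf B l ∩ D = A ∩ D := by
  change liminf B l ⊓ D = _
  rw [inf_comm, inf_liminf]
  simp_rw [inf_comm D]
  exact (congrArg (liminf · l) (funext hB)).trans (liminf_const _)

lemma measurableSet_liminf_of_antitone {Ω ι : Type*} [Preorder ι] {m : ι → MeasurableSpace Ω}
    (hm : Monotone m) {u : ℕ → ι} (hu : Antitone u) {B : ℕ → Set Ω}
    (hB : ∀ n, MeasurableSet[m (u n)] (B n)) (N : ℕ) :
    MeasurableSet[m (u N)] (liminf B atTop) := by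
  rw [← liminf_nat_add B N]
  exact @MeasurableSet.measurableSet_liminf _ (m (u N)) _
    fun n => hm (hu (Nat.le_add_left N n)) _ (hB (n + N))

lemma exists_measurableSet_inter_eq_of_rightContinuous {Ω : Type*}
    {m : ℝ≥0 → MeasurableSpace Ω} (hm : Monotone m)
    (hrc : ∀ (t : ℝ≥0) (A : Set Ω),
      (∀ s : ℝ≥0, t < s → MeasurableSet[m s] A) → MeasurableSet[m t] A)
    {t : ℝ≥0} {A D : Set Ω}
    (h : ∀ s : ℝ≥0, t < s → ∃ B, MeasurableSet[m s] B ∧ A ∩ D = B ∩ D) :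
    ∃ B, MeasurableSet[m t] B ∧ A ∩ D = B ∩ D := by
  obtain ⟨u, hu_anti, htu, hu_lim⟩ := exists_seq_strictAnti_tendsto t
  choose B hB_meas hB_eq using fun n => h (u n) (htu n)
  refine ⟨liminf B atTop, hrc t _ fun s hts => ?_,
    (liminf_inter_eq_of_forall_inter_eq fun n => (hB_eq n).symm).symm⟩
  obtain ⟨N, hN⟩ := (hu_lim.eventually (gt_mem_nhds hts)).exists
  exact hm hN.le _ (measurableSet_liminf_of_antitone hm hu_anti.antitone hB_meas N)

theorem stmt4_general {Ω : Type*} {k : ℕ} (F : MeasurableSpace Ω)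
    (Fi : Fin k → ℝ≥0 → MeasurableSpace Ω) (D : Fin k → Set Ω)
    (hFimono : ∀ i, Monotone (Fi i))
    (hFirc : ∀ i (t : ℝ≥0) (A : Set Ω),
      (∀ s : ℝ≥0, t < s → MeasurableSet[Fi i s] A) → MeasurableSet[Fi i t] A) :
    ∀ (t : ℝ≥0) (A : Set Ω),
      dirSumMem F Fi D t A ↔ ∀ s : ℝ≥0, t < s → dirSumMem F Fi D s A := by
  intro t A
  constructor
  · rintro ⟨hA, hAi⟩ s hts
    exact ⟨hA, fun i => (hAi i).imp fun Ai hAi => ⟨hFimono i hts.le _ hAi.1, hAi.2⟩⟩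
  · intro h
    refine ⟨(h (t + 1) (lt_add_one t)).1, fun i => ?_⟩
    exact exists_measurableSet_inter_eq_of_rightContinuous (hFimono i) (hFirc i)
      fun s hts => (h s hts).2 i

theorem stmt4 {Ω : Type*} {k : ℕ} (F : MeasurableSpace Ω)
    (Fi : Fin k → ℝ≥0 → MeasurableSpace Ω) (D : Fin k → Set Ω)
    (hDmeas : ∀ i, MeasurableSet[F] (D i))
    (hDdisj : Pairwise (Function.onFun Disjoint D))
    (hDcover : (⋃ i, D i) = Set.univ)
    (hFimono : ∀ i, Monotone (Fi i)) (hFiF : ∀ i t, Fi i t ≤ F)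
    (hFirc : ∀ i (t : ℝ≥0) (A : Set Ω),
      (∀ s : ℝ≥0, t < s → MeasurableSet[Fi i s] A) → MeasurableSet[Fi i t] A) :
    ∀ (t : ℝ≥0) (A : Set Ω),
      dirSumMem F Fi D t A ↔ ∀ s : ℝ≥0, t < s → dirSumMem F Fi D s A :=
  stmt4_general F Fi D hFimono hFirc
end

section
/- Let ν be a probability measure on ℝ_+^n with density a with respect to μ^{⊗n}, μ non-atomic σ-finite, and let r be the increasing re-ordering map. Then for every bounded Borel g on ℝ_+^n, a version of the conditional expectation of g under ν given r is E^ν[g | r = x] = (ḡa(x) / ā(x))·1_{ā(x)>0}, where ḡa(x) = Σ_{π ∈ S_n} (g a)(π(x)) and ā(x) = Σ_{π ∈ S_n} a(π(x)). That is, for every bounded Borel h, ∫ g(x) h(r(x)) ν(dx) = ∫ (ḡa(r(x)) / ā(r(x))) 1_{ā(r(x))>0} h(r(x)) ν(dx). -/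
open MeasureTheory
open scoped ENNReal

/-- The increasing re-ordering of the coordinates of a vector. -/
noncomputable def sortVec {n : ℕ} (x : Fin n → ℝ) : Fin n → ℝ := x ∘ Tuple.sort x

/-!
Each map `x ↦ x ∘ π` preserves `μ^{⊗n}` and fixes `r = sortVec`, so averaging over `S_n` gives
`n! ∫ b(x) H(r x) dμ^{⊗n} = ∫ b̄(x) H(r x) dμ^{⊗n}` for every `b` and `H`. With `b = g a` and with
`b = a`, `n!` times the two sides of the claim (as `μ^{⊗n}`-integrals weighted by `a`) become
`∫ ḡa(x) h(r x)` and `∫ ā(x) E(r x) h(r x)` with `E = (ḡa / ā) 1_{ā > 0}`. These agree because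
`ā E = ḡa` wherever `ā < ∞` (`ā = 0` forces `ḡa = 0`), and `ā < ∞` a.e. since `∫ ā = n!`.
-/

open Finset

lemma ENNReal.mul_ite_pos_div_cancel {A B : ℝ≥0∞} (hA : A ≠ ∞) (hB : A = 0 → B = 0) :
    A * (if 0 < A then B / A else 0) = B := by
  rcases eq_zero_or_pos A with h0 | hpos
  · simp [h0, hB h0]
  · rw [if_pos hpos, ENNReal.mul_div_cancel hpos.ne' hA]

section PermSum

lemma measurable_comp_perm {ι α : Type*} [MeasurableSpace α] (σ : Equiv.Perm ι) :
    Measurable fun x : ι → α => x ∘ σ := by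
  fun_prop

lemma measurePreserving_comp_perm {ι α : Type*} [Fintype ι] [MeasurableSpace α]
    (μ : Measure α) [SigmaFinite μ] (σ : Equiv.Perm ι) :
    MeasurePreserving (fun x : ι → α => x ∘ σ) (Measure.pi fun _ => μ) (Measure.pi fun _ => μ) :=
  measurePreserving_arrowCongr' _ _ σ.symm (MeasurableEquiv.refl α) fun _ => .id μ

variable {ι α : Type*} [Fintype ι] [DecidableEq ι]

/-- The paper's `b̄`. -/
noncomputable def permSum (b : (ι → α) → ℝ≥0∞) (x : ι → α) : ℝ≥0∞ :=
  ∑ π : Equiv.Perm ι, b (x ∘ π)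

/-- The paper's version of `E^ν[g | r = x]`. -/
noncomputable def permCondExp (g a : (ι → α) → ℝ≥0∞) (x : ι → α) : ℝ≥0∞ :=
  if 0 < permSum a x then permSum (fun y => g y * a y) x / permSum a x else 0

lemma permSum_comp_perm (b : (ι → α) → ℝ≥0∞) (x : ι → α) (σ : Equiv.Perm ι) :
    permSum b (x ∘ σ) = permSum b x :=
  Fintype.sum_equiv (Equiv.mulLeft σ) _ _ fun _ => rfl

lemma permSum_mul_eq_zero {g a : (ι → α) → ℝ≥0∞} {x : ι → α} (hx : permSum a x = 0) :
    permSum (fun y => g y * a y) x = 0 := by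
  have ha : ∀ π : Equiv.Perm ι, a (x ∘ π) = 0 := fun π => sum_eq_zero_iff.mp hx π (mem_univ π)
  exact sum_eq_zero fun π _ => by simp [ha π]

variable [MeasurableSpace α]

lemma Measurable.permSum {b : (ι → α) → ℝ≥0∞} (hb : Measurable b) : Measurable (permSum b) :=
  Finset.measurable_sum _ fun π _ => hb.comp (measurable_comp_perm π)

lemma Measurable.permCondExp {g a : (ι → α) → ℝ≥0∞} (hg : Measurable g) (ha : Measurable a) :
    Measurable (permCondExp g a) :=
  Measurable.ite (measurableSet_lt measurable_const ha.permSum)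
    ((hg.mul ha).permSum.div ha.permSum) measurable_const

lemma lintegral_permSum (μ : Measure α) [SigmaFinite μ] {b : (ι → α) → ℝ≥0∞}
    (hb : Measurable b) :
    ∫⁻ x, permSum b x ∂Measure.pi (fun _ => μ) =
      Fintype.card (Equiv.Perm ι) * ∫⁻ x, b x ∂Measure.pi (fun _ => μ) := by
  simp only [permSum]
  rw [lintegral_finsetSum' (f := fun (π : Equiv.Perm ι) (x : ι → α) => b (x ∘ π)) _
    fun π _ => (hb.comp (measurable_comp_perm π)).aemeasurable]
  simp_rw [(measurePreserving_comp_perm μ _).lintegral_comp hb, sum_const, nsmul_eq_mul,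
    card_univ]

lemma ae_permSum_lt_top (μ : Measure α) [SigmaFinite μ] {b : (ι → α) → ℝ≥0∞}
    (hb : Measurable b) (hint : ∫⁻ x, b x ∂Measure.pi (fun _ => μ) ≠ ∞) :
    ∀ᵐ x ∂Measure.pi (fun _ => μ), permSum b x < ∞ :=
  ae_lt_top hb.permSum <| by
    rw [lintegral_permSum μ hb]
    exact ENNReal.mul_ne_top (ENNReal.natCast_ne_top _) hint

end PermSum

section SortVec

variable {n : ℕ}

lemma sortVec_comp_perm (x : Fin n → ℝ) (σ : Equiv.Perm (Fin n)) :
    sortVec (x ∘ σ) = sortVec x :=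
  Tuple.comp_perm_comp_sort_eq_comp_sort

lemma permSum_sortVec (b : (Fin n → ℝ) → ℝ≥0∞) (x : Fin n → ℝ) :
    permSum b (sortVec x) = permSum b x :=
  permSum_comp_perm b x _

lemma measurableSet_monotone_comp_perm (σ : Equiv.Perm (Fin n)) :
    MeasurableSet {x : Fin n → ℝ | Monotone (x ∘ σ)} := by
  simp only [Monotone, Function.comp_apply, Set.ofPred_forall]
  exact .iInter fun i => .iInter fun j => .iInter fun _ =>
    measurableSet_le (measurable_pi_apply (σ i)) (measurable_pi_apply (σ j))

lemma measurable_sortVec : Measurable (sortVec (n := n)) := by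
  intro s hs
  -- `sortVec` agrees with `x ↦ x ∘ σ` on the measurable set where `x ∘ σ` is monotone
  have hpre : sortVec ⁻¹' s =
      ⋃ σ : Equiv.Perm (Fin n), {x | Monotone (x ∘ σ)} ∩ (fun x => x ∘ σ) ⁻¹' s := by
    ext x
    simp only [Set.mem_preimage, Set.mem_iUnion, Set.mem_inter_iff, Set.mem_ofPred_eq]
    refine ⟨fun hx => ⟨Tuple.sort x, Tuple.monotone_sort x, hx⟩, ?_⟩
    rintro ⟨σ, hmono, hxs⟩
    rwa [Tuple.comp_sort_eq_comp_iff_monotone.mpr hmono] at hxs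
  rw [hpre]
  exact .iUnion fun σ => (measurableSet_monotone_comp_perm σ).inter (measurable_comp_perm σ hs)

lemma lintegral_mul_comp_sortVec (μ : Measure ℝ) [SigmaFinite μ]
    {b H : (Fin n → ℝ) → ℝ≥0∞} (hb : Measurable b) (hH : Measurable H) :
    Fintype.card (Equiv.Perm (Fin n)) * ∫⁻ x, b x * H (sortVec x) ∂Measure.pi (fun _ => μ) =
      ∫⁻ x, permSum b x * H (sortVec x) ∂Measure.pi (fun _ => μ) := by
  rw [← lintegral_permSum μ (b := fun x => b x * H (sortVec x))
    (hb.mul (hH.comp measurable_sortVec))]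
  simp only [permSum, sortVec_comp_perm, sum_mul]

end SortVec

theorem stmt17_general {n : ℕ} (μ : Measure ℝ) [SigmaFinite μ]
    (a : (Fin n → ℝ) → ℝ≥0∞) (ha : Measurable a)
    (hprob : ∫⁻ x, a x ∂Measure.pi (fun _ : Fin n => μ) = 1)
    (g : (Fin n → ℝ) → ℝ≥0∞) (hg : Measurable g)
    (h : (Fin n → ℝ) → ℝ≥0∞) (hh : Measurable h) :
    ∫⁻ x, g x * h (sortVec x) ∂((Measure.pi (fun _ : Fin n => μ)).withDensity a) =
      ∫⁻ x, (if 0 < ∑ π : Equiv.Perm (Fin n), a (sortVec x ∘ π)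
            then (∑ π : Equiv.Perm (Fin n), g (sortVec x ∘ π) * a (sortVec x ∘ π)) /
              (∑ π : Equiv.Perm (Fin n), a (sortVec x ∘ π))
            else 0) * h (sortVec x)
        ∂((Measure.pi (fun _ : Fin n => μ)).withDensity a) := by
  set P := Measure.pi fun _ : Fin n => μ
  change _ = ∫⁻ x, permCondExp g a (sortVec x) * h (sortVec x) ∂P.withDensity a
  have hF := hg.permCondExp ha
  rw [lintegral_withDensity_eq_lintegral_mul P ha (g := fun x => g x * h (sortVec x))
      (hg.mul (hh.comp measurable_sortVec)),
    lintegral_withDensity_eq_lintegral_mul P ha (g := fun x => permCondExp g a (sortVec x) *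
      h (sortVec x)) ((hF.comp measurable_sortVec).mul (hh.comp measurable_sortVec))]
  have hswap : ∀ x, a x * (g x * h (sortVec x)) = g x * a x * h (sortVec x) := fun x => by ring
  simp only [Pi.mul_apply, hswap]
  refine (ENNReal.mul_right_inj
    (Nat.cast_ne_zero.2 (Fintype.card_ne_zero (α := Equiv.Perm (Fin n))))
    (ENNReal.natCast_ne_top _)).1 ?_
  rw [lintegral_mul_comp_sortVec μ (b := fun x => g x * a x) (hg.mul ha) hh,
    lintegral_mul_comp_sortVec μ (H := fun y => permCondExp g a y * h y) ha (hF.mul hh)]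
  refine lintegral_congr_ae ?_
  filter_upwards [ae_permSum_lt_top μ ha (hprob ▸ ENNReal.one_ne_top)] with x hx
  rw [permCondExp, permSum_sortVec, permSum_sortVec, ← mul_assoc,
    ENNReal.mul_ite_pos_div_cancel hx.ne permSum_mul_eq_zero]

theorem stmt17 {n : ℕ} (μ : Measure ℝ) [SigmaFinite μ] [NullSingletonClass μ]
    (a : (Fin n → ℝ) → ℝ≥0∞) (ha : Measurable a)
    (hprob : ∫⁻ x, a x ∂Measure.pi (fun _ : Fin n => μ) = 1)
    (g : (Fin n → ℝ) → ℝ≥0∞) (hg : Measurable g)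
    (C : ℝ≥0∞) (hC : C ≠ ⊤) (hgC : ∀ x, g x ≤ C)
    (h : (Fin n → ℝ) → ℝ≥0∞) (hh : Measurable h) :
    ∫⁻ x, g x * h (sortVec x) ∂((Measure.pi (fun _ : Fin n => μ)).withDensity a) =
      ∫⁻ x, (if 0 < ∑ π : Equiv.Perm (Fin n), a (sortVec x ∘ π)
            then (∑ π : Equiv.Perm (Fin n), g (sortVec x ∘ π) * a (sortVec x ∘ π)) /
              (∑ π : Equiv.Perm (Fin n), a (sortVec x ∘ π))
            else 0) * h (sortVec x)
        ∂((Measure.pi (fun _ : Fin n => μ)).withDensity a) :=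
  stmt17_general μ a ha hprob g hg h hh
end
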